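/- arXiv:math/9806153 — 4 statements merged into one kernel-verified Lean document; each statement's English description precedes it below -/
import Mathlib

section
/- Let (O, m) be a commutative local ring and let I_1, ..., I_ℓ (with ℓ ≥ 2) be ideals of O contained in the maximal ideal m, such that length(O/I_1) ≥ length(O/I_i) for all i. Set k = Σ_{i=1}^{ℓ} length(O/I_i). If k < ∞, then length(O/(I_2 ∩ ... ∩ I_ℓ)) ≤ τ(k, ℓ) = k − ⌊k/ℓ⌋ − ℓ + γ(k, ℓ) + 1. -/
/-- `γ(k,ℓ) = 1` if `ℓ ∣ k`, and `0` otherwise. -/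
def gammaZ (k ℓ : ℕ) : ℤ := if ℓ ∣ k then 1 else 0

/-- `τ(k,ℓ) = k − ⌊k/ℓ⌋ − ℓ + γ(k,ℓ) + 1`, as an integer. -/
def tauZ (k ℓ : ℕ) : ℤ := (k : ℤ) - ((k / ℓ : ℕ) : ℤ) - (ℓ : ℤ) + gammaZ k ℓ + 1

/-- The length of an `O`-module `M`, i.e. the length of the longest chain of submodules. -/
noncomputable def moduleLength (O M : Type*) [CommRing O] [AddCommGroup M] [Module O M] :
    WithBot ℕ∞ :=
  Order.krullDim (Submodule O M)


open Order

section CL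
variable {α β γ : Type*} [PartialOrder α] [Preorder β] [Preorder γ]

/-- Counting lemma: two monotone maps jointly detecting strict inequalities bound chain length. -/
lemma cl_aux (f : α → β) (g : α → γ) (hf : Monotone f) (hg : Monotone g)
    (hfg : ∀ a b : α, a < b → f a < f b ∨ g a < g b) :
    ∀ p : LTSeries α, (p.length : ℕ∞) ≤ Order.height (f p.last) + Order.height (g p.last) := by
  suffices H : ∀ (t : ℕ) (p : LTSeries α), p.length = t →
      (p.length : ℕ∞) ≤ Order.height (f p.last) + Order.height (g p.last) by
    intro p; exact H p.length p rfl
  intro t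
  induction t with
  | zero => intro p hn; simp [hn]
  | succ t ih =>
    intro p hn
    by_cases hb : Order.height (f p.last) = ⊤
    · simp [hb]
    by_cases hc : Order.height (g p.last) = ⊤
    · simp [hc]
    have hlt : p.eraseLast.last < p.last := p.eraseLast_last_rel_last (by omega)
    have h1 : Order.height (f p.eraseLast.last) ≤ Order.height (f p.last) :=
      Order.height_mono (hf hlt.le)
    have h2 : Order.height (g p.eraseLast.last) ≤ Order.height (g p.last) :=
      Order.height_mono (hg hlt.le)
    have iht : (t : ℕ∞) ≤ Order.height (f p.eraseLast.last) + Order.height (g p.eraseLast.last) := by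
      have := ih p.eraseLast (by simp [hn])
      rwa [RelSeries.eraseLast_length, hn] at this
    have hcast : ((p.length : ℕ) : ℕ∞) = (t : ℕ∞) + 1 := by rw [hn]; push_cast; ring
    rw [hcast]
    rcases hfg _ _ hlt with hs | hs
    · have hstrict : Order.height (f p.eraseLast.last) < Order.height (f p.last) :=
        Order.height_strictMono hs (lt_of_le_of_lt h1 (lt_top_iff_ne_top.2 hb))
      have : Order.height (f p.eraseLast.last) + 1 ≤ Order.height (f p.last) :=
        Order.add_one_le_of_lt hstrict
      calc (t : ℕ∞) + 1
          ≤ (Order.height (f p.eraseLast.last) + Order.height (g p.eraseLast.last)) + 1 := by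
            exact add_le_add_left iht 1
        _ = (Order.height (f p.eraseLast.last) + 1) + Order.height (g p.eraseLast.last) := by
            ring
        _ ≤ Order.height (f p.last) + Order.height (g p.last) := add_le_add this h2
    · have hstrict : Order.height (g p.eraseLast.last) < Order.height (g p.last) :=
        Order.height_strictMono hs (lt_of_le_of_lt h2 (lt_top_iff_ne_top.2 hc))
      have : Order.height (g p.eraseLast.last) + 1 ≤ Order.height (g p.last) :=
        Order.add_one_le_of_lt hstrict
      calc (t : ℕ∞) + 1
          ≤ (Order.height (f p.eraseLast.last) + Order.height (g p.eraseLast.last)) + 1 := by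
            exact add_le_add_left iht 1
        _ = Order.height (f p.eraseLast.last) + (Order.height (g p.eraseLast.last) + 1) := by
            ring
        _ ≤ Order.height (f p.last) + Order.height (g p.last) := add_le_add h1 this
end CL

section Mod
variable {O : Type*} [CommRing O]

/-- length of a product module -/
lemma hgt_prod (M N : Type*) [AddCommGroup M] [Module O M] [AddCommGroup N] [Module O N] :
    Order.height (⊤ : Submodule O (M × N))
      ≤ Order.height (⊤ : Submodule O M) + Order.height (⊤ : Submodule O N) := by
  have key := cl_aux (fun Q : Submodule O (M × N) => Q.comap (LinearMap.inl O M N))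
      (fun Q : Submodule O (M × N) => Q.map (LinearMap.snd O M N))
      (fun _ _ h => Submodule.comap_mono h)
      (fun _ _ h => Submodule.map_mono h) ?_
  · apply Order.height_le
    intro p hp
    have := key p
    rw [hp] at this
    simpa using this
  · intro a b hab
    by_contra hcon
    push_neg at hcon
    obtain ⟨hc1, hc2⟩ := hcon
    have e1 : a.comap (LinearMap.inl O M N) = b.comap (LinearMap.inl O M N) := by
      rcases (Submodule.comap_mono (f := LinearMap.inl O M N) hab.le).lt_or_eq with h | h
      · exact absurd h hc1
      · exact h
    have e2 : a.map (LinearMap.snd O M N) = b.map (LinearMap.snd O M N) := by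
      rcases (Submodule.map_mono (f := LinearMap.snd O M N) hab.le).lt_or_eq with h | h
      · exact absurd h hc2
      · exact h
    have hba : b ≤ a := by
      rintro ⟨x, y⟩ hxy
      have hy : y ∈ b.map (LinearMap.snd O M N) := ⟨(x, y), hxy, rfl⟩
      rw [← e2] at hy
      obtain ⟨⟨x', y'⟩, hx'a, hy'⟩ := hy
      simp only [LinearMap.snd_apply] at hy'
      subst hy'
      have hsub : ((x - x', 0) : M × N) ∈ b := by
        have := b.sub_mem hxy (hab.le hx'a)
        simpa using this
      have hco : x - x' ∈ b.comap (LinearMap.inl O M N) := by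
        simpa using hsub
      rw [← e1] at hco
      have hco' : ((x - x', 0) : M × N) ∈ a := by simpa using hco
      have := a.add_mem hx'a hco'
      simpa using this
    exact hab.2 hba

/-- strictly smaller: injective map with proper range -/
lemma hgt_inj {M P : Type*} [AddCommGroup M] [Module O M] [AddCommGroup P] [Module O P]
    (φ : M →ₗ[O] P) (hinj : Function.Injective φ) (hrange : LinearMap.range φ ≠ ⊤) :
    Order.height (⊤ : Submodule O M) + 1 ≤ Order.height (⊤ : Submodule O P) := by
  have hsm : StrictMono (Submodule.map φ) :=
    Monotone.strictMono_of_injective (fun _ _ h => Submodule.map_mono h)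
      (Submodule.map_injective_of_injective hinj)
  cases hM : Order.height (⊤ : Submodule O M) with
  | top =>
    -- then height ⊤ in P is also ⊤
    have hle : ∀ m : ℕ, (m : ℕ∞) ≤ Order.height (⊤ : Submodule O P) := by
      intro m
      obtain ⟨p, hplast, hplen⟩ := Order.exists_series_of_le_height (⊤ : Submodule O M)
        (n := m) (by rw [hM]; exact le_top)
      have := Order.length_le_height (p := p.map (Submodule.map φ) hsm) le_top
      simpa [hplen] using this
    have : Order.height (⊤ : Submodule O P) = ⊤ := by
      by_contra h
      obtain ⟨c, hc⟩ := WithTop.ne_top_iff_exists.mp h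
      rw [ENat.some_eq_coe] at hc
      have h2 := hle (c + 1)
      rw [← hc] at h2
      have h4 : c + 1 ≤ c := Nat.cast_le.mp h2
      omega
    simp [this]
  | coe m =>
    obtain ⟨p, hplast, hplen⟩ := Order.exists_series_of_height_eq_coe _ hM
    have hlast_lt : (p.map (Submodule.map φ) hsm).last < ⊤ := by
      rw [LTSeries.last_map, hplast, Submodule.map_top]
      exact lt_top_iff_ne_top.2 hrange
    have := Order.length_le_height (p := (p.map (Submodule.map φ) hsm).snoc ⊤ hlast_lt) le_top
    simp only [RelSeries.snoc_length, LTSeries.map_length, hplen] at this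
    exact_mod_cast this
end Mod

section LocalPart
variable {O : Type*} [CommRing O] [IsLocalRing O]

lemma key2 (A B : Ideal O) (hA : A ≤ IsLocalRing.maximalIdeal O)
    (hB : B ≤ IsLocalRing.maximalIdeal O) :
    Order.height (⊤ : Submodule O (O ⧸ (A ⊓ B))) + 1
      ≤ Order.height (⊤ : Submodule O (O ⧸ A)) + Order.height (⊤ : Submodule O (O ⧸ B)) := by
  have hcA : A ⊓ B ≤ Submodule.comap (LinearMap.id : O →ₗ[O] O) A := by
    rw [Submodule.comap_id]; exact inf_le_left
  have hcB : A ⊓ B ≤ Submodule.comap (LinearMap.id : O →ₗ[O] O) B := by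
    rw [Submodule.comap_id]; exact inf_le_right
  set φ : (O ⧸ (A ⊓ B)) →ₗ[O] (O ⧸ A) × (O ⧸ B) :=
    LinearMap.prod (Submodule.mapQ (A ⊓ B) A LinearMap.id hcA)
      (Submodule.mapQ (A ⊓ B) B LinearMap.id hcB) with hφ
  have hφ_apply : ∀ x : O, φ (Submodule.Quotient.mk x)
      = (Submodule.Quotient.mk x, Submodule.Quotient.mk x) := by
    intro x
    rfl
  have hinj : Function.Injective φ := by
    rw [← LinearMap.ker_eq_bot, eq_bot_iff]
    rintro x hx
    obtain ⟨x, rfl⟩ := Submodule.Quotient.mk_surjective _ x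
    have hx' : ((Submodule.Quotient.mk x : O ⧸ A), (Submodule.Quotient.mk x : O ⧸ B)) = 0 := by
      rw [← hφ_apply]; exact hx
    have h1 : (Submodule.Quotient.mk x : O ⧸ A) = 0 := congrArg Prod.fst hx'
    have h2 : (Submodule.Quotient.mk x : O ⧸ B) = 0 := congrArg Prod.snd hx'
    rw [Submodule.Quotient.mk_eq_zero] at h1 h2
    rw [Submodule.mem_bot, Submodule.Quotient.mk_eq_zero]
    exact Submodule.mem_inf.mpr ⟨h1, h2⟩
  have hrange : LinearMap.range φ ≠ ⊤ := by
    intro htop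
    have hmem : ((Submodule.Quotient.mk (1 : O) : O ⧸ A), (0 : O ⧸ B)) ∈ LinearMap.range φ := by
      rw [htop]; exact Submodule.mem_top
    obtain ⟨y, hy⟩ := hmem
    obtain ⟨x, rfl⟩ := Submodule.Quotient.mk_surjective _ y
    rw [hφ_apply] at hy
    have h1 : (Submodule.Quotient.mk x : O ⧸ A) = Submodule.Quotient.mk 1 := congrArg Prod.fst hy
    have h2 : (Submodule.Quotient.mk x : O ⧸ B) = 0 := congrArg Prod.snd hy
    rw [Submodule.Quotient.eq] at h1
    rw [Submodule.Quotient.mk_eq_zero] at h2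
    have hone : (1 : O) ∈ IsLocalRing.maximalIdeal O := by
      have : (1 : O) = x - (x - 1) := by ring
      rw [this]
      exact Submodule.sub_mem _ (hB h2) (hA h1)
    exact (Ideal.IsMaximal.ne_top (IsLocalRing.maximalIdeal.isMaximal O))
      ((Ideal.eq_top_iff_one _).mpr hone)
  calc Order.height (⊤ : Submodule O (O ⧸ (A ⊓ B))) + 1
      ≤ Order.height (⊤ : Submodule O ((O ⧸ A) × (O ⧸ B))) := hgt_inj φ hinj hrange
    _ ≤ Order.height (⊤ : Submodule O (O ⧸ A)) + Order.height (⊤ : Submodule O (O ⧸ B)) :=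
        hgt_prod _ _

lemma key_finset {ℓ : ℕ} (I : Fin ℓ → Ideal O) (hIm : ∀ i, I i ≤ IsLocalRing.maximalIdeal O)
    (n : Fin ℓ → ℕ) (hn : ∀ i, Order.height (⊤ : Submodule O (O ⧸ I i)) = (n i : ℕ∞)) :
    ∀ (s : Finset (Fin ℓ)), s.Nonempty →
      Order.height (⊤ : Submodule O (O ⧸ (⨅ i ∈ s, I i))) + (s.card : ℕ∞)
        ≤ (∑ i ∈ s, (n i : ℕ∞)) + 1 := by
  intro s hs
  induction hs using Finset.Nonempty.cons_induction with
  | singleton a =>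
    have h1 : (⨅ i ∈ ({a} : Finset (Fin ℓ)), I i) = I a := by simp
    rw [h1]
    simp [hn a]
  | cons a s ha hs ih =>
    have hJ : (⨅ i ∈ s, I i) ≤ IsLocalRing.maximalIdeal O := by
      obtain ⟨b, hb⟩ := hs
      exact le_trans (iInf₂_le b hb) (hIm b)
    have hcons : (⨅ i ∈ Finset.cons a s ha, I i) = I a ⊓ ⨅ i ∈ s, I i := by
      rw [Finset.cons_eq_insert, Finset.iInf_insert]
    rw [hcons, Finset.card_cons, Finset.sum_cons]
    have hk2 := key2 (I a) (⨅ i ∈ s, I i) (hIm a) hJ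
    rw [hn a] at hk2
    have hcast : ((s.card + 1 : ℕ) : ℕ∞) = (s.card : ℕ∞) + 1 := by push_cast; ring
    rw [hcast]
    calc Order.height (⊤ : Submodule O (O ⧸ (I a ⊓ ⨅ i ∈ s, I i))) + ((s.card : ℕ∞) + 1)
        = (Order.height (⊤ : Submodule O (O ⧸ (I a ⊓ ⨅ i ∈ s, I i))) + 1) + (s.card : ℕ∞) := by
          ring
      _ ≤ ((n a : ℕ∞) + Order.height (⊤ : Submodule O (O ⧸ (⨅ i ∈ s, I i)))) + (s.card : ℕ∞) :=
          add_le_add_left hk2 _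
      _ = (n a : ℕ∞) + (Order.height (⊤ : Submodule O (O ⧸ (⨅ i ∈ s, I i))) + (s.card : ℕ∞)) := by
          ring
      _ ≤ (n a : ℕ∞) + ((∑ i ∈ s, (n i : ℕ∞)) + 1) := add_le_add_right ih _
      _ = ((n a : ℕ∞) + ∑ i ∈ s, (n i : ℕ∞)) + 1 := by ring

end LocalPart

/-- Let `(O, m)` be a commutative local ring and `I_1, …, I_ℓ` (with `ℓ ≥ 2`) ideals of `O`
contained in the maximal ideal `m`, with `length(O/I_1) ≥ length(O/I_i)` for all `i`.
Set `k = Σ_i length(O/I_i)`.  If `k < ∞` (here: each colength is a natural number `n i`),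
then `length(O/(I_2 ∩ ⋯ ∩ I_ℓ)) ≤ τ(k,ℓ)`. -/
theorem length_quotient_inf_le_tau
    {O : Type*} [CommRing O] [IsLocalRing O] {ℓ : ℕ} (hℓ : 2 ≤ ℓ)
    (I : Fin ℓ → Ideal O) (hIm : ∀ i, I i ≤ IsLocalRing.maximalIdeal O)
    (n : Fin ℓ → ℕ)
    (hn : ∀ i, moduleLength O (O ⧸ I i) = ((n i : ℕ∞) : WithBot ℕ∞))
    (hmax : ∀ i, n i ≤ n ⟨0, by omega⟩)
    (k : ℕ) (hk : k = ∑ i, n i) :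
    ∃ L : ℕ,
      moduleLength O (O ⧸ (⨅ i ∈ Finset.univ.erase (⟨0, by omega⟩ : Fin ℓ), I i))
        = ((L : ℕ∞) : WithBot ℕ∞) ∧ (L : ℤ) ≤ tauZ k ℓ := by
  classical
  have hn' : ∀ i, Order.height (⊤ : Submodule O (O ⧸ I i)) = ((n i : ℕ) : ℕ∞) := by
    intro i
    have h := hn i
    rw [moduleLength, ← Order.height_top_eq_krullDim] at h
    exact_mod_cast h
  set i0 : Fin ℓ := ⟨0, by omega⟩ with hi0
  set s0 : Finset (Fin ℓ) := Finset.univ.erase i0 with hs0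
  have hs0ne : s0.Nonempty := by
    refine ⟨⟨1, by omega⟩, ?_⟩
    rw [hs0, Finset.mem_erase]
    exact ⟨by simp [hi0, Fin.ext_iff], Finset.mem_univ _⟩
  have hcard : s0.card = ℓ - 1 := by
    rw [hs0, Finset.card_erase_of_mem (Finset.mem_univ _), Finset.card_univ, Fintype.card_fin]
  set S : ℕ := ∑ i ∈ s0, n i with hS
  have hkS : n i0 + S = k := by
    rw [hS, hk, hs0]
    exact Finset.add_sum_erase _ _ (Finset.mem_univ _)
  have hclaim := key_finset I hIm n hn' s0 hs0ne
  rw [hcard] at hclaim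
  have hsumcast : (∑ i ∈ s0, ((n i : ℕ) : ℕ∞)) = ((S : ℕ) : ℕ∞) := by
    rw [hS]; push_cast; rfl
  rw [hsumcast] at hclaim
  -- finiteness
  have hne : Order.height (⊤ : Submodule O (O ⧸ (⨅ i ∈ s0, I i))) ≠ ⊤ := by
    intro htop
    rw [htop, top_add] at hclaim
    have : ((S : ℕ∞) + 1) ≠ ⊤ := by
      rw [show ((S : ℕ∞) + 1) = ((S + 1 : ℕ) : ℕ∞) from by push_cast; ring]
      exact ENat.coe_ne_top _
    exact this (top_le_iff.mp hclaim)
  obtain ⟨L, hL⟩ := WithTop.ne_top_iff_exists.mp hne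
  rw [ENat.some_eq_coe] at hL
  rw [← hL] at hclaim
  have hfin : L + (ℓ - 1) ≤ S + 1 := by
    exact Nat.cast_le.mp (show ((L + (ℓ - 1) : ℕ) : ℕ∞) ≤ ((S + 1 : ℕ) : ℕ∞) by
      rw [Nat.cast_add, Nat.cast_add, Nat.cast_one]; exact hclaim)
  -- each n i ≥ 1
  have hone : ∀ i, 1 ≤ n i := by
    intro i
    by_contra h
    have hn0 : ((n i : ℕ) : ℕ∞) = 0 := by
      have : n i = 0 := by omega
      simp [this]
    have hh := hn' i
    rw [hn0, Order.height_eq_zero] at hh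
    have hlt : I i < ⊤ :=
      lt_of_le_of_lt (hIm i) (lt_top_iff_ne_top.2
        (Ideal.IsMaximal.ne_top (IsLocalRing.maximalIdeal.isMaximal O)))
    have hntq : Nontrivial (O ⧸ I i) := Submodule.Quotient.nontrivial_iff.mpr hlt.ne
    have hnt2 : Nontrivial (Submodule O (O ⧸ I i)) := (Submodule.nontrivial_iff O).mpr hntq
    have hbt : (⊤ : Submodule O (O ⧸ I i)) ≤ ⊥ := hh bot_le
    have heq : (⊥ : Submodule O (O ⧸ I i)) = ⊤ := le_antisymm bot_le hbt
    exact bot_ne_top heq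
  -- k ≤ ℓ * n i0
  have hkle : k ≤ ℓ * n i0 := by
    rw [hk]
    calc ∑ i, n i ≤ ∑ _i : Fin ℓ, n i0 := Finset.sum_le_sum (fun i _ => hmax i)
      _ = ℓ * n i0 := by simp [Finset.sum_const, Finset.card_univ, mul_comm]
  have hℓpos : 0 < ℓ := by omega
  have hdiv : k / ℓ ≤ n i0 := by
    have := Nat.div_le_div_right (c := ℓ) hkle
    rwa [Nat.mul_div_cancel_left _ hℓpos] at this
  have hdiv2 : ¬ ℓ ∣ k → k / ℓ + 1 ≤ n i0 := by
    intro hnd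
    by_contra hcon
    have hle : n i0 ≤ k / ℓ := by omega
    have h5 : ℓ * n i0 ≤ ℓ * (k / ℓ) := Nat.mul_le_mul_left ℓ hle
    have h6 : k ≤ ℓ * (k / ℓ) := le_trans hkle h5
    have h7 : ℓ * (k / ℓ) + k % ℓ = k := Nat.div_add_mod k ℓ
    have h8 : k % ℓ ≠ 0 := fun h => hnd (Nat.dvd_of_mod_eq_zero h)
    generalize hE : ℓ * (k / ℓ) = E at h6 h7
    generalize hR : k % ℓ = R at h7 h8
    omega
  refine ⟨L, ?_, ?_⟩
  · rw [moduleLength, ← Order.height_top_eq_krullDim, ← hL]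
    rfl
  · have h1one := hone i0
    rw [tauZ, gammaZ]
    generalize hE : k / ℓ = e at hdiv hdiv2 ⊢
    by_cases hdvd : ℓ ∣ k
    · simp only [hdvd, if_true]
      omega
    · simp only [hdvd, if_false]
      have := hdiv2 hdvd
      omega
end

section
/- Let ℓ_1, ..., ℓ_m, K_1, ..., K_r and q be positive integers with m ≤ r, q ≥ 1, and ℓ_i ≥ 2 for all i, and set K = Σ_{i=1}^{r} K_i and ℓ* = max(ℓ_1, ..., ℓ_m, 2) (with ℓ* = 2 if m = 0). Then Σ_{i=1}^{m} τ(K_i, ℓ_i) + Σ_{i=m+1}^{r} ⌊K_i/(q+1)⌋ ≤ τ(K, ℓ*). -/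

def cdiv (k ℓ : ℕ) : ℕ := (k - 1) / ℓ + 1

lemma cdiv_mono {ℓ ℓ' : ℕ} (h1 : 1 ≤ ℓ) (h : ℓ ≤ ℓ') (k : ℕ) : cdiv k ℓ' ≤ cdiv k ℓ := by
  unfold cdiv
  exact Nat.add_le_add_right (Nat.div_le_div_left h h1) 1

lemma cdiv_add_le {ℓ : ℕ} (hℓ : 1 ≤ ℓ) {a b : ℕ} (ha : 1 ≤ a) (hb : 1 ≤ b) :
    cdiv (a + b) ℓ ≤ cdiv a ℓ + cdiv b ℓ := by
  obtain ⟨x, rfl⟩ : ∃ x, a = x + 1 := ⟨a - 1, by omega⟩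
  obtain ⟨y, rfl⟩ : ∃ y, b = y + 1 := ⟨b - 1, by omega⟩
  unfold cdiv
  simp only [Nat.add_sub_cancel, show x + 1 + (y + 1) - 1 = x + y + 1 by omega]
  have h1 := Nat.div_add_mod x ℓ
  have h2 := Nat.div_add_mod y ℓ
  have h3 : x % ℓ < ℓ := Nat.mod_lt _ hℓ
  have h4 : y % ℓ < ℓ := Nat.mod_lt _ hℓ
  have key : (x + y + 1) / ℓ < x / ℓ + y / ℓ + 2 := by
    rw [Nat.div_lt_iff_lt_mul hℓ]
    nlinarith
  omega

lemma cdiv_two (k q : ℕ) (hk : 1 ≤ k) (hq : 1 ≤ q) :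
    cdiv k 2 + k / (q + 1) ≤ k := by
  unfold cdiv
  have h : k / (q+1) ≤ k / 2 := Nat.div_le_div_left (by omega) (by omega)
  omega

lemma tau_eq (k ℓ : ℕ) (hk : 1 ≤ k) (hℓ : 1 ≤ ℓ) :
    tauZ k ℓ = (k : ℤ) - (cdiv k ℓ : ℤ) - ℓ + 2 := by
  unfold tauZ gammaZ cdiv
  have hsucc : k / ℓ = (k - 1) / ℓ + if ℓ ∣ k then 1 else 0 := by
    conv_lhs => rw [show k = (k-1) + 1 by omega]
    rw [Nat.succ_div]
    congr 2
    simp [show k - 1 + 1 = k by omega]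
  by_cases hd : ℓ ∣ k
  · simp only [hd, if_true] at hsucc ⊢; push_cast; omega
  · simp only [hd, if_false] at hsucc ⊢; push_cast; omega

lemma cdiv_sum_le (L : ℕ) (hL : 1 ≤ L) (f : ℕ → ℕ) (hf : ∀ i, 1 ≤ f i) :
    ∀ n, 1 ≤ n → cdiv (∑ i ∈ Finset.range n, f i) L ≤ ∑ i ∈ Finset.range n, cdiv (f i) L := by
  intro n hn
  induction n with
  | zero => omega
  | succ n ih =>
    rcases Nat.eq_zero_or_pos n with h0 | h0
    · subst h0; simp
    · rw [Finset.sum_range_succ, Finset.sum_range_succ]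
      have hs : 1 ≤ ∑ i ∈ Finset.range n, f i :=
        le_trans (hf 0) (Finset.single_le_sum (fun i _ => Nat.zero_le _) (Finset.mem_range.mpr h0))
      exact le_trans (cdiv_add_le hL hs (hf n)) (Nat.add_le_add_right (ih h0) _)

/-- Let `ℓ_1, …, ℓ_m`, `K_1, …, K_r` and `q` be positive integers with `m ≤ r`, `q ≥ 1` and
`ℓ_i ≥ 2` for all `i`; set `K = Σ_{i=1}^{r} K_i` and `ℓ* = max(ℓ_1, …, ℓ_m, 2)`.  Then
`Σ_{i=1}^{m} τ(K_i, ℓ_i) + Σ_{i=m+1}^{r} ⌊K_i/(q+1)⌋ ≤ τ(K, ℓ*)`. -/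
theorem sum_tau_add_sum_div_le_tau
    {m r : ℕ} (hmr : m ≤ r) (q : ℕ) (hq : 1 ≤ q)
    (l : Fin m → ℕ) (hl : ∀ i, 2 ≤ l i)
    (K : Fin r → ℕ) (hK : ∀ i, 0 < K i) :
    ∑ i : Fin m, tauZ (K (Fin.castLE hmr i)) (l i)
      + ∑ i ∈ Finset.univ.filter (fun i : Fin r => m ≤ (i : ℕ)), ((K i / (q + 1) : ℕ) : ℤ)
      ≤ tauZ (∑ i, K i) (Finset.univ.sup l ⊔ 2) := by
  set L := Finset.univ.sup l ⊔ 2 with hLdef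
  rcases Nat.eq_zero_or_pos r with hr | hr
  · -- r = 0, hence m = 0
    have hm : m = 0 := by omega
    subst hm; subst hr
    simp [tauZ, gammaZ, hLdef]
  -- main case r ≥ 1
  set K' : ℕ → ℕ := fun n => if h : n < r then K ⟨n, h⟩ else 1 with hK'def
  set l' : ℕ → ℕ := fun n => if h : n < m then l ⟨n, h⟩ else 2 with hl'def
  have hK' : ∀ n, 1 ≤ K' n := by
    intro n; simp only [hK'def]; split
    · exact hK _
    · exact le_refl 1
  have hl' : ∀ n, 2 ≤ l' n := by
    intro n; simp only [hl'def]; split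
    · exact hl _
    · exact le_refl 2
  have hL2 : 2 ≤ L := le_sup_right
  have hl'L : ∀ n, n < m → l' n ≤ L := by
    intro n hn
    have : l' n = l ⟨n, hn⟩ := by simp [hl'def, hn]
    rw [this]
    exact le_trans (Finset.le_sup (f := l) (Finset.mem_univ (⟨n, hn⟩ : Fin m))) le_sup_left
  have hS : (∑ i, K i) = ∑ i ∈ Finset.range r, K' i := by
    rw [← Fin.sum_univ_eq_sum_range]
    refine Finset.sum_congr rfl fun i _ => ?_
    simp [hK'def, i.isLt]
  set T := ∑ i ∈ Finset.range r, K' i with hTdef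
  have hT1 : 1 ≤ T := le_trans (hK' 0)
    (Finset.single_le_sum (fun i _ => Nat.zero_le _) (Finset.mem_range.mpr hr))
  -- rewrite RHS
  rw [hS, tau_eq T L hT1 (by omega)]
  -- rewrite first LHS sum
  have h1 : ∑ i : Fin m, tauZ (K (Fin.castLE hmr i)) (l i)
      = ∑ i ∈ Finset.range m, ((K' i : ℤ) - (cdiv (K' i) (l' i) : ℤ) - (l' i : ℤ) + 2) := by
    rw [← Fin.sum_univ_eq_sum_range]
    refine Finset.sum_congr rfl fun i _ => ?_
    have e1 : K' i.val = K (Fin.castLE hmr i) := by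
      simp [hK'def, show (i : ℕ) < r from lt_of_lt_of_le i.isLt hmr]
      rfl
    have e2 : l' i.val = l i := by simp [hl'def, i.isLt]
    rw [e1, e2, tau_eq _ _ (hK _) (by have := hl i; omega)]
  -- rewrite second LHS sum
  have h2 : ∑ i ∈ Finset.univ.filter (fun i : Fin r => m ≤ (i : ℕ)), ((K i / (q + 1) : ℕ) : ℤ)
      = ∑ i ∈ Finset.Ico m r, ((K' i / (q + 1) : ℕ) : ℤ) := by
    rw [Finset.sum_filter]
    have e1 : ∀ i : Fin r,
        (if m ≤ (i : ℕ) then ((K i / (q + 1) : ℕ) : ℤ) else 0)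
        = (fun n => if m ≤ n then ((K' n / (q + 1) : ℕ) : ℤ) else 0) (i : ℕ) := by
      intro i
      have : K' i.val = K i := by simp [hK'def, i.isLt]
      simp [this]
    rw [Finset.sum_congr rfl fun i _ => e1 i]
    rw [show (∑ i : Fin r, (fun n => if m ≤ n then ((K' n / (q + 1) : ℕ) : ℤ) else 0) (i : ℕ))
        = ∑ i ∈ Finset.range r, (if m ≤ i then ((K' i / (q + 1) : ℕ) : ℤ) else 0) from
      Fin.sum_univ_eq_sum_range (fun n => if m ≤ n then ((K' n / (q + 1) : ℕ) : ℤ) else 0) r]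
    rw [← Finset.sum_filter]
    congr 1
    ext x
    simp only [Finset.mem_filter, Finset.mem_range, Finset.mem_Ico]
    omega
  rw [h1, h2]
  -- key inequalities
  have hA1 : cdiv T L ≤ ∑ i ∈ Finset.range r, cdiv (K' i) L :=
    cdiv_sum_le L (by omega) K' hK' r hr
  have hsplit : ∀ g : ℕ → ℕ, ∑ i ∈ Finset.range r, g i
      = ∑ i ∈ Finset.range m, g i + ∑ i ∈ Finset.Ico m r, g i := by
    intro g
    simp only [Finset.range_eq_Ico]
    rw [Finset.sum_Ico_consecutive g (Nat.zero_le m) hmr]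
  have hB1 : ∑ i ∈ Finset.range m, cdiv (K' i) L
      ≤ ∑ i ∈ Finset.range m, cdiv (K' i) (l' i) :=
    Finset.sum_le_sum fun i hi =>
      cdiv_mono (by have := hl' i; omega) (hl'L i (Finset.mem_range.mp hi)) _
  have hB2 : ∑ i ∈ Finset.Ico m r, (cdiv (K' i) L + K' i / (q + 1))
      ≤ ∑ i ∈ Finset.Ico m r, K' i := by
    refine Finset.sum_le_sum fun i _ => ?_
    calc cdiv (K' i) L + K' i / (q + 1)
        ≤ cdiv (K' i) 2 + K' i / (q + 1) :=
          Nat.add_le_add_right (cdiv_mono (by omega) hL2 _) _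
      _ ≤ K' i := cdiv_two _ _ (hK' i) hq
  have hC : (L : ℤ) - 2 ≤ ∑ i ∈ Finset.range m, ((l' i : ℤ) - 2) := by
    rcases Nat.eq_zero_or_pos m with hm | hm
    · subst hm
      have : L = 2 := by
        simp [hLdef]
      simp [this]
    · have : Nonempty (Fin m) := ⟨⟨0, hm⟩⟩
      obtain ⟨j, -, hj⟩ := Finset.exists_mem_eq_sup (Finset.univ : Finset (Fin m))
        Finset.univ_nonempty l
      have hLj : L = l j := by
        rw [hLdef, hj]; exact sup_eq_left.mpr (hl j)
      have hjv : l' j.val = l j := by simp [hl'def, j.isLt]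
      have : (l' j.val : ℤ) - 2 ≤ ∑ i ∈ Finset.range m, ((l' i : ℤ) - 2) :=
        Finset.single_le_sum (f := fun i => (l' i : ℤ) - 2)
          (fun i _ => by have := hl' i; push_cast; omega)
          (Finset.mem_range.mpr j.isLt)
      rw [hLj]
      rw [hjv] at this
      linarith
  -- assemble
  have hTsplit := hsplit K'
  have hCsplit := hsplit (fun i => cdiv (K' i) L)
  have hA1' : (cdiv T L : ℤ) ≤ ∑ i ∈ Finset.range m, (cdiv (K' i) L : ℤ)
      + ∑ i ∈ Finset.Ico m r, (cdiv (K' i) L : ℤ) := by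
    have h := hA1
    rw [hCsplit] at h
    exact_mod_cast h
  have hB1' : (∑ i ∈ Finset.range m, (cdiv (K' i) L : ℤ))
      ≤ ∑ i ∈ Finset.range m, (cdiv (K' i) (l' i) : ℤ) := by exact_mod_cast hB1
  have hB2' : ∑ i ∈ Finset.Ico m r, (cdiv (K' i) L : ℤ)
      + ∑ i ∈ Finset.Ico m r, ((K' i / (q + 1) : ℕ) : ℤ)
      ≤ ∑ i ∈ Finset.Ico m r, (K' i : ℤ) := by
    have h := hB2
    rw [Finset.sum_add_distrib] at h
    exact_mod_cast h
  have hT' : (T : ℤ) = ∑ i ∈ Finset.range m, (K' i : ℤ) + ∑ i ∈ Finset.Ico m r, (K' i : ℤ) := by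
    exact_mod_cast hTsplit
  simp only [Finset.sum_add_distrib, Finset.sum_sub_distrib, Finset.sum_const,
    Finset.card_range, nsmul_eq_mul] at hC ⊢
  linarith
end

section
/- Let K_1, K_2, ℓ_1, ℓ_2 be positive integers with 2 ≤ ℓ_1 ≤ ℓ_2. Then τ(K_1, ℓ_1) + τ(K_2, ℓ_2) ≤ τ(K_1 + K_2, ℓ_2). -/
/-- Let `K_1, K_2, ℓ_1, ℓ_2` be positive integers with `2 ≤ ℓ_1 ≤ ℓ_2`.  Then
`τ(K_1, ℓ_1) + τ(K_2, ℓ_2) ≤ τ(K_1 + K_2, ℓ_2)`. -/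
theorem tau_add_tau_le_tau
    (K₁ K₂ ℓ₁ ℓ₂ : ℕ) (hK₁ : 0 < K₁) (hK₂ : 0 < K₂)
    (hℓ₁ : 2 ≤ ℓ₁) (hℓ : ℓ₁ ≤ ℓ₂) :
    tauZ K₁ ℓ₁ + tauZ K₂ ℓ₂ ≤ tauZ (K₁ + K₂) ℓ₂ := by
  have hℓ₁0 : 0 < ℓ₁ := by omega
  have hℓ₂0 : 0 < ℓ₂ := by omega
  have hr₁ : K₁ % ℓ₂ < ℓ₂ := Nat.mod_lt _ hℓ₂0
  have hr₂ : K₂ % ℓ₂ < ℓ₂ := Nat.mod_lt _ hℓ₂0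
  have hadd : (K₁ + K₂) / ℓ₂ = K₁ / ℓ₂ + K₂ / ℓ₂ +
      if ℓ₂ ≤ K₁ % ℓ₂ + K₂ % ℓ₂ then 1 else 0 := Nat.add_div hℓ₂0
  have hdle : K₁ / ℓ₂ ≤ K₁ / ℓ₁ := Nat.div_le_div_left hℓ hℓ₁0
  have hmodadd : (K₁ + K₂) % ℓ₂ = (K₁ % ℓ₂ + K₂ % ℓ₂) % ℓ₂ := Nat.add_mod _ _ _
  have hd1 : ℓ₁ ∣ K₁ ↔ K₁ % ℓ₁ = 0 := Nat.dvd_iff_mod_eq_zero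
  have hd2 : ℓ₂ ∣ K₂ ↔ K₂ % ℓ₂ = 0 := Nat.dvd_iff_mod_eq_zero
  have hd3 : ℓ₂ ∣ (K₁ + K₂) ↔ (K₁ + K₂) % ℓ₂ = 0 := Nat.dvd_iff_mod_eq_zero
  have hkey : K₁ % ℓ₁ ≠ 0 ∨ K₁ % ℓ₂ = 0 ∨ K₁ / ℓ₂ + 3 ≤ K₁ / ℓ₁ + ℓ₁ := by
    by_cases h1 : ℓ₁ ∣ K₁
    · by_cases h2 : K₁ % ℓ₂ = 0
      · exact Or.inr (Or.inl h2)
      · refine Or.inr (Or.inr ?_)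
        rcases Nat.lt_or_ge ℓ₁ 3 with h3 | h3
        · have hl2 : ℓ₁ = 2 := by omega
          subst hl2
          have hℓ₂3 : 3 ≤ ℓ₂ := by
            rcases Nat.lt_or_ge ℓ₂ 3 with h | h
            · exfalso
              have : ℓ₂ = 2 := by omega
              subst this
              exact h2 (Nat.dvd_iff_mod_eq_zero.mp h1)
            · exact h
          have e1 : ℓ₂ * (K₁ / ℓ₂) + K₁ % ℓ₂ = K₁ := Nat.div_add_mod _ _
          have e2 : 2 * (K₁ / 2) = K₁ := Nat.mul_div_cancel' h1
          have e3 : 3 * (K₁ / ℓ₂) ≤ ℓ₂ * (K₁ / ℓ₂) := Nat.mul_le_mul_right _ hℓ₂3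
          generalize ht : ℓ₂ * (K₁ / ℓ₂) = t at e1 e3
          omega
        · omega
    · exact Or.inl (fun h => h1 (Nat.dvd_iff_mod_eq_zero.mpr h))
  rcases le_or_gt ℓ₂ (K₁ % ℓ₂ + K₂ % ℓ₂) with hc | hc
  · rw [if_pos hc] at hadd
    have hm : (K₁ + K₂) % ℓ₂ = K₁ % ℓ₂ + K₂ % ℓ₂ - ℓ₂ := by
      rw [hmodadd, Nat.mod_eq_sub_mod hc]
      exact Nat.mod_eq_of_lt (by omega)
    simp only [tauZ, gammaZ, hd1, hd2, hd3]
    rcases hkey with hk | hk | hk <;> split_ifs <;> omega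
  · rw [if_neg (by omega)] at hadd
    have hm : (K₁ + K₂) % ℓ₂ = K₁ % ℓ₂ + K₂ % ℓ₂ := by
      rw [hmodadd]; exact Nat.mod_eq_of_lt hc
    simp only [tauZ, gammaZ, hd1, hd2, hd3]
    rcases hkey with hk | hk | hk <;> split_ifs <;> omega
end

section
/- Let r ≥ 1, let K_1, ..., K_r be positive integers, and let ℓ_1, ..., ℓ_r be integers with ℓ_i ≥ 2 for all i. Then Σ_{i=1}^{r} τ(K_i, ℓ_i) ≤ τ(Σ_{i=1}^{r} K_i, max(ℓ_1, ..., ℓ_r)). -/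
lemma lemS (k L : ℕ) (hk : 2 ∣ k) (hnk : ¬ L ∣ k) (hL : 2 ≤ L) :
    k / L + 1 ≤ k / 2 := by
  obtain ⟨m, rfl⟩ := hk
  have hm : 1 ≤ m := by
    rcases Nat.eq_zero_or_pos m with h | h
    · exfalso; exact hnk (by simp [h])
    · exact h
  have hL3 : 3 ≤ L := by
    rcases Nat.lt_or_ge L 3 with h | h
    · interval_cases L
      · exact absurd ⟨m, rfl⟩ hnk
    · exact h
  have h1 : 2 * m / L ≤ 2 * m / 3 := Nat.div_le_div_left hL3 (by norm_num)
  have h2 : 2 * m / 3 < m := Nat.div_lt_of_lt_mul (by omega)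
  have h3 : 2 * m / 2 = m := by omega
  omega

lemma key (k1 k2 ℓ1 L : ℕ) (h2 : 2 ≤ ℓ1) (hL : ℓ1 ≤ L) :
    tauZ k1 ℓ1 + tauZ k2 L ≤ tauZ (k1 + k2) L := by
  have hL0 : 0 < L := by omega
  have F2 : k1 / L ≤ k1 / ℓ1 := Nat.div_le_div_left hL (by omega)
  have main : (k1 + k2) / L + (if ℓ1 ∣ k1 then 1 else 0) + (if L ∣ k2 then 1 else 0) + 1
      ≤ k1 / ℓ1 + k2 / L + ℓ1 + (if L ∣ (k1 + k2) then 1 else 0) := by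
    by_cases hd2 : L ∣ k2
    · obtain ⟨m, rfl⟩ := hd2
      have e1 : (k1 + L * m) / L = k1 / L + m := Nat.add_mul_div_left _ _ hL0
      have e2 : (L * m) / L = m := Nat.mul_div_cancel_left m hL0
      have e3 : (L ∣ k1 + L * m) ↔ L ∣ k1 := by
        rw [Nat.add_comm]; exact Nat.dvd_add_right (dvd_mul_right L m)
      by_cases hd1 : ℓ1 ∣ k1
      · by_cases hdL1 : L ∣ k1
        · simp only [hd1, hdL1, e3, e1, e2, if_pos, dvd_mul_right, if_true]
          omega
        · have hg : ¬ L ∣ k1 + L * m := by rw [e3]; exact hdL1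
          simp only [hd1, if_pos, dvd_mul_right, if_true, hg, if_false, e1, e2]
          rcases Nat.lt_or_ge ℓ1 3 with h3 | h3
          · have hℓ : ℓ1 = 2 := by omega
            subst hℓ
            have := lemS k1 L hd1 hdL1 (by omega)
            omega
          · omega
      · simp only [hd1, if_neg, not_false_iff, dvd_mul_right, if_pos, e1, e2]
        split_ifs <;> omega
    · have F1 : (k1 + k2) / L ≤ k1 / L + k2 / L + 1 := by
        rw [Nat.add_div hL0]
        split_ifs <;> omega
      by_cases hd1 : ℓ1 ∣ k1
      · by_cases hdL1 : L ∣ k1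
        · obtain ⟨m, rfl⟩ := hdL1
          have e1 : (L * m + k2) / L = m + k2 / L := by
            rw [Nat.add_comm, Nat.add_mul_div_left _ _ hL0, Nat.add_comm]
          have e2 : (L * m) / L = m := Nat.mul_div_cancel_left m hL0
          have e3 : (L ∣ L * m + k2) ↔ L ∣ k2 := Nat.dvd_add_right (dvd_mul_right L m)
          have hg : ¬ L ∣ L * m + k2 := by rw [e3]; exact hd2
          have F2' : m ≤ L * m / ℓ1 := by
            calc m = L * m / L := e2.symm
            _ ≤ L * m / ℓ1 := Nat.div_le_div_left hL (by omega)
          simp only [hd1, if_pos, hd2, if_neg, not_false_iff, hg, e1]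
          omega
        · rcases Nat.lt_or_ge ℓ1 3 with h3 | h3
          · have hℓ : ℓ1 = 2 := by omega
            subst hℓ
            have := lemS k1 L hd1 hdL1 (by omega)
            simp only [hd1, if_pos, hd2, if_neg, not_false_iff]
            split_ifs <;> omega
          · simp only [hd1, if_pos, hd2, if_neg, not_false_iff]
            split_ifs <;> omega
      · simp only [hd1, hd2, if_neg, not_false_iff]
        split_ifs <;> omega
  unfold tauZ gammaZ
  split_ifs at main ⊢ <;> (zify at main; push_cast; linarith)

lemma key2_s6 (k1 k2 ℓ1 ℓ2 : ℕ) (h1 : 2 ≤ ℓ1) (h2 : 2 ≤ ℓ2) :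
    tauZ k1 ℓ1 + tauZ k2 ℓ2 ≤ tauZ (k1 + k2) (ℓ1 ⊔ ℓ2) := by
  rcases le_total ℓ1 ℓ2 with h | h
  · rw [sup_eq_right.mpr h]; exact key k1 k2 ℓ1 ℓ2 h1 h
  · rw [sup_eq_left.mpr h, Nat.add_comm k1 k2]
    linarith [key k2 k1 ℓ2 ℓ1 h2 h]

lemma gen {ι : Type*} (s : Finset ι) (hs : s.Nonempty) (K l : ι → ℕ)
    (hl : ∀ i ∈ s, 2 ≤ l i) :
    ∑ i ∈ s, tauZ (K i) (l i) ≤ tauZ (∑ i ∈ s, K i) (s.sup l) := by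
  induction hs using Finset.Nonempty.cons_induction with
  | singleton a => simp
  | cons a s ha hs ih =>
    rw [Finset.sum_cons, Finset.sum_cons, Finset.sup_cons]
    have hsl : 2 ≤ s.sup l := by
      obtain ⟨b, hb⟩ := hs
      exact le_trans (hl b (Finset.mem_cons_of_mem hb)) (Finset.le_sup hb)
    calc tauZ (K a) (l a) + ∑ i ∈ s, tauZ (K i) (l i)
        ≤ tauZ (K a) (l a) + tauZ (∑ i ∈ s, K i) (s.sup l) := by
          have := ih (fun i hi => hl i (Finset.mem_cons_of_mem hi))
          linarith
      _ ≤ tauZ (K a + ∑ i ∈ s, K i) (l a ⊔ s.sup l) :=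
          key2_s6 _ _ _ _ (hl a (Finset.mem_cons_self a s)) hsl

/-- Let `r ≥ 1`, let `K_1, …, K_r` be positive integers and `ℓ_1, …, ℓ_r` integers with
`ℓ_i ≥ 2` for all `i`.  Then `Σ_{i=1}^{r} τ(K_i, ℓ_i) ≤ τ(Σ_{i=1}^{r} K_i, max(ℓ_1, …, ℓ_r))`. -/
theorem sum_tau_le_tau_sum
    {r : ℕ} (hr : 1 ≤ r) (K : Fin r → ℕ) (hK : ∀ i, 0 < K i)
    (l : Fin r → ℕ) (hl : ∀ i, 2 ≤ l i) :
    ∑ i, tauZ (K i) (l i) ≤ tauZ (∑ i, K i) (Finset.univ.sup l) := by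
  have : Nonempty (Fin r) := ⟨⟨0, hr⟩⟩
  exact gen Finset.univ Finset.univ_nonempty K l (fun i _ => hl i)
end
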